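/- arXiv:1601.04201 — 3 statements merged into one kernel-verified Lean document; each statement's English description precedes it below -/
import Mathlib

section
/- Let m ≥ 1 and let p be an odd prime with p ≢ 1 (mod 2^m). Then there exists n ∈ ℕ such that 2^m divides p^n - 1 but 2^(m+1) does not divide p^n - 1, if and only if p ≢ -1 (mod 2^m). -/
/-!
Write `v` for the 2-adic valuation. For odd `n` the cofactor `1 + p + ⋯ + p ^ (n - 1)` of `p - 1`
in `p ^ n - 1` is odd, so `v (p ^ n - 1) = v (p - 1)`; for even `n` the lifting-the-exponent lemma
gives `v (p ^ n - 1) = v (p - 1) + v (p + 1) + v n - 1`, and `n = 2 ^ k` realises every value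
`≥ v (p - 1) + v (p + 1)`. Since `p - 1` and `p + 1` are not both divisible by `4`, one of
`v (p - 1)`, `v (p + 1)` equals `1`, and then for `m > v (p - 1)` the value `m` is attained exactly
when `v (p + 1) < m`.
-/

open Finset

lemma Nat.odd_geom_sum {x n : ℕ} (hx : Odd x) (hn : Odd n) : Odd (∑ i ∈ range n, x ^ i) := by
  rwa [odd_sum_iff_odd_card_odd, filter_true_of_mem fun i _ => hx.pow, card_range]

lemma pow_dvd_and_not_pow_succ_dvd_iff {p k m : ℕ} [Fact p.Prime] :
    p ^ m ∣ k ∧ ¬ p ^ (m + 1) ∣ k ↔ k ≠ 0 ∧ padicValNat p k = m := by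
  rcases eq_or_ne k 0 with rfl | hk
  · simp
  · rw [padicValNat_dvd_iff_le hk, padicValNat_dvd_iff_le hk]
    omega

namespace padicValNat

lemma pow_two_sub_one_of_odd {x n : ℕ} (hx : Odd x) (h1x : 1 < x) (hn : Odd n) :
    padicValNat 2 (x ^ n - 1) = padicValNat 2 (x - 1) := by
  have hsum := Nat.odd_geom_sum hx hn
  rw [← geom_sum_mul_of_one_le h1x.le, padicValNat.mul hsum.pos.ne' (by omega),
    padicValNat.eq_zero_of_not_dvd hsum.not_two_dvd_nat, zero_add]

lemma min_two_sub_one_two_add_one {x : ℕ} (hx : Odd x) (h1x : 1 < x) :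
    min (padicValNat 2 (x - 1)) (padicValNat 2 (x + 1)) = 1 := by
  have hx2 := Nat.odd_iff.mp hx
  have h2 (k a : ℕ) := padicValNat_dvd_iff (p := 2) k a
  have := h2 1 (x - 1); have := h2 2 (x - 1); have := h2 1 (x + 1); have := h2 2 (x + 1)
  omega

lemma exists_pow_two_sub_one_eq_iff {x m : ℕ} (hx : Odd x) (h1x : 1 < x) :
    (∃ n ≠ 0, padicValNat 2 (x ^ n - 1) = m) ↔
      m = padicValNat 2 (x - 1) ∨ padicValNat 2 (x - 1) + padicValNat 2 (x + 1) ≤ m := by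
  have hx2 : ¬ 2 ∣ x := hx.not_two_dvd_nat
  constructor
  · rintro ⟨n, hn, rfl⟩
    rcases Nat.even_or_odd n with heven | hodd
    · have hlte := pow_two_sub_one h1x hx2 hn heven
      have hvn : 1 ≤ padicValNat 2 n := one_le_padicValNat_of_dvd hn heven.two_dvd
      omega
    · exact .inl (pow_two_sub_one_of_odd hx h1x hodd)
  · rintro (rfl | hm)
    · exact ⟨1, one_ne_zero, by rw [pow_one]⟩
    · set k := m + 1 - padicValNat 2 (x - 1) - padicValNat 2 (x + 1)
      have hk : k ≠ 0 := by omega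
      have hlte := pow_two_sub_one h1x hx2 (pow_ne_zero k two_ne_zero)
        ((Nat.even_pow' hk).mpr even_two)
      rw [padicValNat.prime_pow] at hlte
      exact ⟨2 ^ k, pow_ne_zero k two_ne_zero, by omega⟩

end padicValNat

theorem stmt_2_general (m p : ℕ) (hp : p.Prime) (hodd : p ≠ 2)
    (h1 : ¬ (2 ^ m ∣ p - 1)) :
    (∃ n : ℕ, 2 ^ m ∣ p ^ n - 1 ∧ ¬ (2 ^ (m + 1) ∣ p ^ n - 1)) ↔
      ¬ (2 ^ m ∣ p + 1) := by
  have hpodd : Odd p := hp.odd_of_ne_two hodd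
  have h1p : 1 < p := hp.one_lt
  have hsub : padicValNat 2 (p - 1) < m := by
    rwa [padicValNat_dvd_iff_le (by omega), not_le] at h1
  have hmin := padicValNat.min_two_sub_one_two_add_one hpodd h1p
  have hexp (n : ℕ) : p ^ n - 1 ≠ 0 ↔ n ≠ 0 :=
    ⟨fun h hn => by simp [hn] at h, fun hn => Nat.sub_ne_zero_of_lt (Nat.one_lt_pow hn h1p)⟩
  simp_rw [pow_dvd_and_not_pow_succ_dvd_iff, hexp,
    padicValNat.exists_pow_two_sub_one_eq_iff hpodd h1p,
    padicValNat_dvd_iff_le (by omega : p + 1 ≠ 0)]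
  omega

theorem stmt_2 (m p : ℕ) (hm : 1 ≤ m) (hp : p.Prime) (hodd : p ≠ 2)
    (h1 : ¬ (2 ^ m ∣ p - 1)) :
    (∃ n : ℕ, 2 ^ m ∣ p ^ n - 1 ∧ ¬ (2 ^ (m + 1) ∣ p ^ n - 1)) ↔
      ¬ (2 ^ m ∣ p + 1) :=
  stmt_2_general m p hp hodd h1
end

section
/- Let m ≥ 1 and let p be an odd prime with p ≢ ±1 (mod 2^m), and let n be the multiplicative order of p in (ℤ/2^mℤ)^×. Then 2^m divides p^n - 1 and 2^(m+1) does not divide p^n - 1. -/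
/-!
The order of an odd number modulo `2 ^ m` divides `φ (2 ^ m) = 2 ^ (m - 1)`, so `n = 2 ^ j`,
and `j ≥ 1` because `p ≢ 1`. Write `p ^ n - 1 = (p ^ k - 1) (p ^ k + 1)` with `n = 2 k`: one
factor is `≡ 2 (mod 4)`, so if `2 ^ (m + 1)` divided the product then `p ^ k ≡ ±1 (mod 2 ^ m)`.
The sign `+` contradicts the minimality of `n`; the sign `-` is excluded for `k = 1` by
`p ≢ -1`, and for even `k` because `p ^ k + 1 ≡ 2 (mod 4)` while `m ≥ 2`.
-/

theorem ZMod.natCast_eq_one_iff_dvd_sub_one {N b : ℕ} (hb : 1 ≤ b) :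
    (b : ZMod N) = 1 ↔ N ∣ b - 1 := by
  rw [← ZMod.natCast_eq_zero_iff, Nat.cast_sub hb, Nat.cast_one, sub_eq_zero]

theorem exists_orderOf_natCast_zmod_two_pow_eq_two_pow {a : ℕ} (ha : Odd a) (m : ℕ) :
    ∃ j, orderOf (a : ZMod (2 ^ m)) = 2 ^ j := by
  have hcop : a.Coprime (2 ^ m) := (Nat.coprime_two_right.mpr ha).pow_right m
  have hdvd : orderOf (a : ZMod (2 ^ m)) ∣ Nat.totient (2 ^ m) := by
    rw [← ZMod.coe_unitOfCoprime a hcop, orderOf_units]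
    exact orderOf_dvd_of_pow_eq_one (ZMod.pow_totient _)
  cases m with
  | zero => exact ⟨0, by simpa using hdvd⟩
  | succ m =>
    rw [Nat.totient_prime_pow_succ Nat.prime_two, Nat.add_one_sub_one, mul_one] at hdvd
    obtain ⟨j, -, hj⟩ := (Nat.dvd_prime_pow Nat.prime_two).mp hdvd
    exact ⟨j, hj⟩

theorem two_pow_dvd_of_two_pow_succ_dvd_mul {m q r : ℕ} (hq : q % 4 = 2)
    (h : 2 ^ (m + 1) ∣ q * r) : 2 ^ m ∣ r := by
  obtain ⟨u, rfl⟩ : 2 ∣ q := by omega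
  have hu : Odd u := Nat.odd_iff.mpr (by omega)
  rw [pow_succ', mul_assoc] at h
  exact ((Nat.coprime_two_left.mpr hu).pow_left m).dvd_of_dvd_mul_left
    (Nat.dvd_of_mul_dvd_mul_left two_pos h)

theorem two_pow_dvd_sub_one_or_add_one_of_two_pow_succ_dvd_sq_sub_one {m a : ℕ} (ha : Odd a)
    (h : 2 ^ (m + 1) ∣ a ^ 2 - 1) : 2 ^ m ∣ a - 1 ∨ 2 ^ m ∣ a + 1 := by
  rw [show a ^ 2 - 1 = (a + 1) * (a - 1) by simpa using Nat.sq_sub_sq a 1] at h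
  rcases Nat.odd_mod_four_iff.mp (Nat.odd_iff.mp ha) with h4 | h4
  · exact .inl (two_pow_dvd_of_two_pow_succ_dvd_mul (by omega) h)
  · exact .inr (two_pow_dvd_of_two_pow_succ_dvd_mul (by omega) (mul_comm (a + 1) _ ▸ h))

theorem not_four_dvd_sq_add_one (b : ℕ) : ¬ 4 ∣ b ^ 2 + 1 := by
  rw [Nat.dvd_iff_mod_eq_zero, Nat.add_mod, Nat.pow_mod]
  have := Nat.mod_lt b (show 0 < 4 by norm_num)
  interval_cases b % 4 <;> decide

theorem stmt_3_general (m p : ℕ) (hp : p.Prime) (hodd : p ≠ 2)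
    (h1 : ¬ (2 ^ m ∣ p - 1)) (h2 : ¬ (2 ^ m ∣ p + 1))
    (n : ℕ) (hn : n = orderOf (p : ZMod (2 ^ m))) :
    2 ^ m ∣ p ^ n - 1 ∧ ¬ (2 ^ (m + 1) ∣ p ^ n - 1) := by
  have hp_odd : Odd p := hp.odd_of_ne_two hodd
  have hpow_pos (k : ℕ) : 1 ≤ p ^ k := Nat.one_le_pow _ _ hp.pos
  have hm : 2 ≤ m := by
    by_contra! hm
    exact h1 ((pow_dvd_pow 2 (Nat.le_of_lt_succ hm)).trans (Nat.Odd.sub_odd hp_odd odd_one).two_dvd)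
  have hdvd_n : 2 ^ m ∣ p ^ n - 1 := by
    rw [← ZMod.natCast_eq_one_iff_dvd_sub_one (hpow_pos n), Nat.cast_pow, hn]
    exact pow_orderOf_eq_one _
  refine ⟨hdvd_n, fun h => ?_⟩
  obtain ⟨j, hj⟩ := exists_orderOf_natCast_zmod_two_pow_eq_two_pow hp_odd m
  rw [← hn] at hj
  subst hj
  cases j with
  | zero => exact h1 (by simpa using hdvd_n)
  | succ i =>
    rw [pow_succ 2 i, pow_mul] at h
    rcases two_pow_dvd_sub_one_or_add_one_of_two_pow_succ_dvd_sq_sub_one hp_odd.pow h with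
      hsub | hadd
    · have hdvd_pow : 2 ^ (i + 1) ∣ 2 ^ i := hn ▸ orderOf_dvd_of_pow_eq_one (by
        rw [← Nat.cast_pow, ZMod.natCast_eq_one_iff_dvd_sub_one (hpow_pos _)]
        exact hsub)
      exact absurd ((Nat.pow_dvd_pow_iff_le_right one_lt_two).mp hdvd_pow) (by omega)
    · cases i with
      | zero => exact h2 (by simpa using hadd)
      | succ i =>
        rw [pow_succ 2 i, pow_mul] at hadd
        exact not_four_dvd_sq_add_one _ ((pow_dvd_pow 2 hm).trans hadd)

theorem stmt_3 (m p : ℕ) (hm : 1 ≤ m) (hp : p.Prime) (hodd : p ≠ 2)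
    (h1 : ¬ (2 ^ m ∣ p - 1)) (h2 : ¬ (2 ^ m ∣ p + 1))
    (n : ℕ) (hn : n = orderOf (p : ZMod (2 ^ m))) :
    2 ^ m ∣ p ^ n - 1 ∧ ¬ (2 ^ (m + 1) ∣ p ^ n - 1) :=
  stmt_3_general m p hp hodd h1 h2 n hn
end

section
/- Let q be an odd prime power and K a field (which may be assumed algebraically closed) containing F_q with characteristic not 2. Then there is no injective group homomorphism from SL_2(F_q) into PGL_2(K). -/
/-!
`SL₂(F_q)` contains a quaternion pair: `A = !![0, 1; -1, 0]` and `B = !![a, b; b, -a]` with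
`a² + b² = -1` satisfy `A² = B² = -1 ≠ 1` and `AB = -BA ≠ BA`. In `PGL₂(K)` no such pair exists:
if `x² = y² ≠ 1` and `M`, `N` lift `x`, `y`, then `M` and `N` both commute with `M²`, which is not
scalar, and the centralizer of a non-scalar `2 × 2` matrix is commutative, because modulo scalars
two matrices commute exactly when their coordinate vectors have vanishing cross product.
-/

open Matrix

lemma cross_eq_zero_of_cross_eq_zero {K : Type*} [Field K] {u v w : Fin 3 → K} (hu : u ≠ 0)
    (hv : u ⨯₃ v = 0) (hw : u ⨯₃ w = 0) : v ⨯₃ w = 0 := by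
  have multiple_of_u {x : Fin 3 → K} (hx : u ⨯₃ x = 0) : ∃ a : K, a • u = x := by
    by_contra! h
    exact crossProduct_ne_zero_iff_linearIndependent.mpr
      ((LinearIndependent.pair_iff' hu).mpr h) hx
  obtain ⟨a, rfl⟩ := multiple_of_u hv
  obtain ⟨b, rfl⟩ := multiple_of_u hw
  simp [cross_self]

namespace Matrix

variable {R : Type*} [CommRing R]

/-- Coordinates of `X` modulo scalar matrices; in them the commutator of two `2 × 2` matrices
is the cross product. -/
def modScalarVec (X : Matrix (Fin 2) (Fin 2) R) : Fin 3 → R :=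
  ![X 0 1, X 1 0, X 0 0 - X 1 1]

lemma commutator_fin_two (X Y : Matrix (Fin 2) (Fin 2) R) :
    X * Y - Y * X = let c := modScalarVec X ⨯₃ modScalarVec Y; !![c 2, c 1; c 0, -c 2] := by
  ext i j
  fin_cases i <;> fin_cases j <;>
    simp [modScalarVec, cross_apply, Matrix.mul_apply, Fin.sum_univ_two] <;> ring

lemma commute_iff_cross_modScalarVec_eq_zero (X Y : Matrix (Fin 2) (Fin 2) R) :
    Commute X Y ↔ modScalarVec X ⨯₃ modScalarVec Y = 0 := by
  rw [commute_iff_eq, ← sub_eq_zero, commutator_fin_two]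
  constructor
  · intro h
    have := congrFun₂ h
    ext k
    fin_cases k
    · simpa using this 1 0
    · simpa using this 0 1
    · simpa using this 0 0
  · intro h
    ext i j
    fin_cases i <;> fin_cases j <;> simp [h]

lemma modScalarVec_eq_zero_iff (X : Matrix (Fin 2) (Fin 2) R) :
    modScalarVec X = 0 ↔ X ∈ Set.range (scalar (Fin 2)) := by
  constructor
  · intro h
    have h01 : X 0 1 = 0 := congrFun h 0
    have h10 : X 1 0 = 0 := congrFun h 1
    have h11 : X 1 1 = X 0 0 := (sub_eq_zero.mp (congrFun h 2)).symm
    refine ⟨X 0 0, ?_⟩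
    ext i j
    fin_cases i <;> fin_cases j <;> simp [h01, h10, h11]
  · rintro ⟨k, rfl⟩
    ext i
    fin_cases i <;> simp [modScalarVec]

lemma commute_of_commute_of_notMem_range_scalar {K : Type*} [Field K]
    {T X Y : Matrix (Fin 2) (Fin 2) K} (hT : T ∉ Set.range (scalar (Fin 2)))
    (hX : Commute X T) (hY : Commute Y T) : Commute X Y := by
  rw [commute_iff_cross_modScalarVec_eq_zero] at hX hY ⊢
  rw [← modScalarVec_eq_zero_iff] at hT
  rw [← cross_anticomm, neg_eq_zero] at hX hY
  exact cross_eq_zero_of_cross_eq_zero hT hX hY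

end Matrix

lemma commute_of_sq_eq_sq_of_sq_ne_one {K : Type*} [Field K]
    {x y : GL (Fin 2) K ⧸ Subgroup.center (GL (Fin 2) K)} (hxy : x ^ 2 = y ^ 2) (hx : x ^ 2 ≠ 1) :
    Commute x y := by
  obtain ⟨M, rfl⟩ := QuotientGroup.mk_surjective x
  obtain ⟨N, rfl⟩ := QuotientGroup.mk_surjective y
  have hM : M ^ 2 ∉ Subgroup.center (GL (Fin 2) K) := by
    rwa [← QuotientGroup.eq_one_iff, QuotientGroup.mk_pow]
  obtain ⟨z, hz, hNM⟩ : ∃ z ∈ Subgroup.center (GL (Fin 2) K), M ^ 2 = N ^ 2 * z := by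
    refine ⟨(N ^ 2)⁻¹ * M ^ 2, QuotientGroup.eq.mp ?_, by group⟩
    simpa only [QuotientGroup.mk_pow] using hxy.symm
  have hN : Commute N (M ^ 2) :=
    hNM ▸ (Commute.self_pow N 2).mul_right (Subgroup.mem_center_iff.mp hz N)
  have hMN : Commute (M : Matrix (Fin 2) (Fin 2) K) N :=
    Matrix.commute_of_commute_of_notMem_range_scalar
      (mt GeneralLinearGroup.mem_center_iff_val_mem_range_scalar.mpr hM)
      (Commute.self_pow M 2).units_val hN.units_val
  exact (Commute.units_of_val hMN).map (QuotientGroup.mk' _)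

namespace Matrix.SpecialLinearGroup

lemma exists_sq_eq_sq_not_commute {F : Type*} [Field F] (hF : ringChar F ≠ 2) {a b : F}
    (hab : a ^ 2 + b ^ 2 = -1) :
    ∃ A B : SpecialLinearGroup (Fin 2) F, A ^ 2 = B ^ 2 ∧ A ^ 2 ≠ 1 ∧ ¬ Commute A B := by
  let A : SpecialLinearGroup (Fin 2) F := ⟨!![0, 1; -1, 0], by simp [det_fin_two_of]⟩
  let B : SpecialLinearGroup (Fin 2) F := ⟨!![a, b; b, -a], by
    simp [det_fin_two_of]; linear_combination -hab⟩
  have hA : A ^ 2 = -1 := by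
    ext i j
    rw [coe_pow]
    fin_cases i <;> fin_cases j <;> simp [A, sq]
  have hB : B ^ 2 = -1 := by
    ext i j
    rw [coe_pow]
    fin_cases i <;> fin_cases j <;> simp [B, sq, ← hab] <;> ring
  have hA1 : A ^ 2 ≠ 1 := by
    rw [hA]
    intro h
    refine hF (neg_one_eq_one_iff.mp ?_)
    simpa using congr_arg (fun g : SpecialLinearGroup (Fin 2) F => g 0 0) h
  have hAB : A * B = B * A * A ^ 2 := by
    ext i j
    simp only [hA, coe_mul, coe_neg, coe_one]
    fin_cases i <;> fin_cases j <;> simp [A, B]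
  exact ⟨A, B, hA.trans hB.symm, hA1, fun h => hA1 (mul_eq_left.mp (hAB.symm.trans h.eq))⟩

end Matrix.SpecialLinearGroup

theorem stmt_5_general (p n : ℕ) [Fact p.Prime] (hodd : p ≠ 2)
    (K : Type*) [Field K] :
    ¬ ∃ f : Matrix.SpecialLinearGroup (Fin 2) (GaloisField p n) →*
        (GL (Fin 2) K ⧸ Subgroup.center (GL (Fin 2) K)),
      Function.Injective f := by
  rintro ⟨f, hf⟩
  obtain ⟨a, b, hab⟩ := CharP.sq_add_sq (GaloisField p n) p (-1)
  obtain ⟨A, B, hAB, hA, hnc⟩ := SpecialLinearGroup.exists_sq_eq_sq_not_commute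
    ((ringChar.eq (GaloisField p n) p).symm ▸ hodd) (by simpa using hab)
  refine hnc (Commute.of_map hf (commute_of_sq_eq_sq_of_sq_ne_one ?_ ?_))
  · rw [← map_pow, ← map_pow, hAB]
  · rwa [← map_pow, ne_eq, map_eq_one_iff f hf]

theorem stmt_5 (p n : ℕ) [Fact p.Prime] (hodd : p ≠ 2) (hn : n ≠ 0)
    (K : Type*) [Field K] [IsAlgClosed K] [CharP K p] :
    ¬ ∃ f : Matrix.SpecialLinearGroup (Fin 2) (GaloisField p n) →*
        (GL (Fin 2) K ⧸ Subgroup.center (GL (Fin 2) K)),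
      Function.Injective f :=
  stmt_5_general p n hodd K
end
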